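/- arXiv:2208.13927 — 2 statements merged into one kernel-verified Lean document; each statement's English description precedes it below -/
import Mathlib

section
/- Let n ≥ 2 and let K and L be compact convex subsets of ℝⁿ whose affine hulls each have dimension at least n−1. If ∫_{S^{n−1}} vol_{n−1}((K|u^⊥) △ (L|u^⊥)) dσ(u) = 0, then K = L. -/
open MeasureTheory Metric

/-- The rotation-invariant (uniform) probability measure on the unit sphere `S^{n-1} ⊂ ℝⁿ`,
realized as the normalized `(n-1)`-dimensional Hausdorff measure restricted to the sphere. -/
noncomputable def sphereMeasure (n : ℕ) : Measure (EuclideanSpace ℝ (Fin n)) :=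
  (μH[(n : ℝ) - 1] (sphere (0 : EuclideanSpace ℝ (Fin n)) 1))⁻¹ •
    (μH[(n : ℝ) - 1]).restrict (sphere (0 : EuclideanSpace ℝ (Fin n)) 1)

/-- Orthogonal projection of `x` onto the hyperplane `u^⊥`, viewed in the ambient space. -/
noncomputable def projHyperplane {n : ℕ} (u x : EuclideanSpace ℝ (Fin n)) :
    EuclideanSpace ℝ (Fin n) :=
  (Submodule.orthogonalProjectionOnto (ℝ ∙ u)ᗮ x : EuclideanSpace ℝ (Fin n))

/-!
Let `x ∈ K \ L`. A unit vector `v` separates `x` from `L`: `⟪v, x - q⟫ ≥ d > 0` on `L`. For unit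
`u` with `|⟪v, u⟫|` small, projection onto `u^⊥` keeps `x` at distance `≥ d / 2` from `L|u^⊥`.
Since `dim K ≥ n - 1`, `K` contains an `(n-1)`-disk normal to some unit `w`; when `|⟪w, u⟫| ≥ α`
this disk projects onto a set containing an `(n-1)`-disk of radius proportional to `α`, and by
convexity `K|u^⊥` then contains a smaller disk, of radius independent of `u`, centred close to the
projection of `x`, hence disjoint from `L|u^⊥`. Both conditions hold for all `u` in a
spherical cap, which has positive measure, so the integral is positive. The normalising constant
`μH[n-1](S^{n-1})` is finite because each closed hemisphere is the image of a disk under the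
(smooth, hence Lipschitz on compacts) inverse stereographic projection.
-/

open Module Set
open scoped InnerProductSpace ENNReal

section Convex

variable {F : Type*} [NormedAddCommGroup F] [NormedSpace ℝ F]

theorem Convex.inter_ball_subset_of_inter_ball_subset {C : Set F} (hC : Convex ℝ C)
    {S : Submodule ℝ F} {x z : F} {r t : ℝ} (hx : x ∈ C) (hxS : x ∈ S)
    (hball : ↑S ∩ ball z r ⊆ C) (ht₀ : 0 < t) (ht₁ : t ≤ 1) :
    ↑S ∩ ball (x + t • (z - x)) (t * r) ⊆ C := by
  rintro b ⟨hbS, hb⟩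
  set y := x + t⁻¹ • (b - x)
  have hy : y ∈ ↑S ∩ ball z r := by
    refine ⟨S.add_mem hxS (S.smul_mem _ (S.sub_mem hbS hxS)), ?_⟩
    have hyz : y - z = t⁻¹ • (b - (x + t • (z - x))) := by
      rw [smul_sub, smul_add, smul_smul, inv_mul_cancel₀ ht₀.ne', one_smul]
      simp only [y, smul_sub]
      abel
    rw [mem_ball, dist_eq_norm] at hb ⊢
    rw [hyz, norm_smul, Real.norm_eq_abs, abs_of_pos (inv_pos.2 ht₀)]
    calc t⁻¹ * _ < t⁻¹ * (t * r) := by gcongr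
      _ = r := by field_simp
  have hby : b = x + t • (y - x) := by
    simp only [y, add_sub_cancel_left, smul_smul, mul_inv_cancel₀ ht₀.ne', one_smul]
    abel
  rw [hby]
  exact hC.add_smul_sub_mem hx (hball hy) ⟨ht₀.le, ht₁⟩

end Convex

section Hyperplane

variable {F : Type*} [NormedAddCommGroup F] [InnerProductSpace ℝ F]

theorem starProjection_orthogonal_span_singleton_apply {u : F} (hu : ‖u‖ = 1) (x : F) :
    (ℝ ∙ u)ᗮ.starProjection x = x - ⟪u, x⟫_ℝ • u := by
  rw [Submodule.starProjection_orthogonal, sub_apply,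
    ContinuousLinearMap.id_apply, Submodule.starProjection_unit_singleton ℝ hu]

theorem inner_sub_mul_abs_inner_le_norm_starProjection {u v : F} (hu : ‖u‖ = 1) (hv : ‖v‖ = 1)
    (y : F) : ⟪v, y⟫_ℝ - ‖y‖ * |⟪v, u⟫_ℝ| ≤ ‖(ℝ ∙ u)ᗮ.starProjection y‖ := by
  have hy : ⟪u, y⟫_ℝ * ⟪v, u⟫_ℝ ≤ ‖y‖ * |⟪v, u⟫_ℝ| :=
    calc _ ≤ |⟪u, y⟫_ℝ| * |⟪v, u⟫_ℝ| := by rw [← abs_mul]; exact le_abs_self _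
      _ ≤ ‖y‖ * |⟪v, u⟫_ℝ| := by gcongr; simpa [hu] using abs_real_inner_le_norm u y
  calc _ ≤ ⟪v, y⟫_ℝ - ⟪u, y⟫_ℝ * ⟪v, u⟫_ℝ := by linarith
    _ = ⟪v, (ℝ ∙ u)ᗮ.starProjection y⟫_ℝ := by
      rw [starProjection_orthogonal_span_singleton_apply hu, inner_sub_right,
        real_inner_smul_right]
    _ ≤ _ := by simpa [hv] using real_inner_le_norm v ((ℝ ∙ u)ᗮ.starProjection y)

theorem inter_ball_subset_starProjection_image {u w : F} (hu : ‖u‖ = 1) (hw : ‖w‖ = 1)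
    {α : ℝ} (hα : 0 < α) (hαu : α ≤ |⟪w, u⟫_ℝ|) (z : F) (ρ : ℝ) :
    ↑(ℝ ∙ u)ᗮ ∩ ball ((ℝ ∙ u)ᗮ.starProjection z) (ρ / (1 + α⁻¹)) ⊆
      (ℝ ∙ u)ᗮ.starProjection '' (↑(AffineSubspace.mk' z (ℝ ∙ w)ᗮ) ∩ ball z ρ) := by
  set P := (ℝ ∙ u)ᗮ.starProjection
  rintro b ⟨hb, hbz⟩
  set y := b - P z
  have hyS : y ∈ (ℝ ∙ u)ᗮ := sub_mem hb ((ℝ ∙ u)ᗮ.starProjection_apply_mem z)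
  have hy : ‖y‖ < ρ / (1 + α⁻¹) := by rwa [mem_ball, dist_eq_norm] at hbz
  have hwu : ⟪w, u⟫_ℝ ≠ 0 := abs_pos.1 (hα.trans_le hαu)
  -- correcting `y` along `u` lands in `w^⊥` without changing its projection
  set a := y - (⟪w, y⟫_ℝ / ⟪w, u⟫_ℝ) • u
  have ha : ‖a‖ ≤ (1 + α⁻¹) * ‖y‖ :=
    calc ‖a‖ ≤ ‖y‖ + |⟪w, y⟫_ℝ / ⟪w, u⟫_ℝ| * ‖u‖ := by
          rw [← Real.norm_eq_abs, ← norm_smul]; exact norm_sub_le _ _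
      _ = ‖y‖ + |⟪w, y⟫_ℝ| / |⟪w, u⟫_ℝ| := by rw [hu, mul_one, abs_div]
      _ ≤ ‖y‖ + ‖y‖ / α := by gcongr; simpa [hw] using abs_real_inner_le_norm w y
      _ = (1 + α⁻¹) * ‖y‖ := by ring
  refine ⟨z + a, ⟨?_, ?_⟩, ?_⟩
  · rw [SetLike.mem_coe, AffineSubspace.mem_mk', vsub_eq_sub, add_sub_cancel_left,
      Submodule.mem_orthogonal_singleton_iff_inner_right, inner_sub_right, real_inner_smul_right,
      div_mul_cancel₀ _ hwu, sub_self]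
  · rw [mem_ball, dist_eq_norm, add_sub_cancel_left]
    calc ‖a‖ ≤ (1 + α⁻¹) * ‖y‖ := ha
      _ < (1 + α⁻¹) * (ρ / (1 + α⁻¹)) := by gcongr
      _ = ρ := by field_simp
  · have hPu : P u = 0 := Submodule.starProjection_orthogonalComplement_singleton_eq_zero u
    have hPy : P y = y := Submodule.starProjection_eq_self_iff.2 hyS
    simp only [a, map_add, map_sub, map_smul, hPu, hPy, smul_zero, sub_zero, y]
    abel

theorem inter_ball_subset_starProjection_image_diff {K L : Set F} (hK : Convex ℝ K)
    {u w z x : F} (hu : ‖u‖ = 1) (hw : ‖w‖ = 1) {α ρ t δ : ℝ} (hα : 0 < α)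
    (hαu : α ≤ |⟪w, u⟫_ℝ|) (hslab : ↑(AffineSubspace.mk' z (ℝ ∙ w)ᗮ) ∩ ball z ρ ⊆ K)
    (hxK : x ∈ K) (hfar : ∀ q ∈ L, δ ≤ ‖(ℝ ∙ u)ᗮ.starProjection (x - q)‖)
    (ht₀ : 0 < t) (ht₁ : t ≤ 1) (htδ : t * (‖z - x‖ + ρ / (1 + α⁻¹)) < δ) :
    ↑(ℝ ∙ u)ᗮ ∩ ball ((ℝ ∙ u)ᗮ.starProjection (x + t • (z - x))) (t * (ρ / (1 + α⁻¹))) ⊆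
      (ℝ ∙ u)ᗮ.starProjection '' K \ (ℝ ∙ u)ᗮ.starProjection '' L := by
  set P := (ℝ ∙ u)ᗮ.starProjection
  set c := P (x + t • (z - x))
  intro b hb
  have hc : c = P x + t • (P z - P x) := by simp only [c, map_add, map_smul, map_sub]
  refine ⟨(hK.linear_image (P : F →ₗ[ℝ] F)).inter_ball_subset_of_inter_ball_subset ⟨x, hxK, rfl⟩
    ((ℝ ∙ u)ᗮ.starProjection_apply_mem x)
    ((inter_ball_subset_starProjection_image hu hw hα hαu z ρ).trans (image_mono hslab))
    ht₀ ht₁ (hc ▸ hb), ?_⟩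
  rintro ⟨q, hq, rfl⟩
  have hbc : ‖c - P q‖ < t * (ρ / (1 + α⁻¹)) := by
    rw [← dist_eq_norm, dist_comm]; exact hb.2
  have hxc : ‖P x - c‖ ≤ t * ‖z - x‖ := by
    rw [← map_sub, sub_add_cancel_left, map_neg, norm_neg]
    refine ((ℝ ∙ u)ᗮ.norm_starProjection_apply_le _).trans_eq ?_
    rw [norm_smul, Real.norm_eq_abs, abs_of_pos ht₀]
  have hnear : ‖P (x - q)‖ < δ :=
    calc ‖P (x - q)‖ = ‖(P x - c) + (c - P q)‖ := by rw [map_sub, sub_add_sub_cancel]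
      _ < δ := by linarith [norm_add_le (P x - c) (c - P q)]
  exact (hfar q hq).not_gt hnear

theorem exists_norm_eq_one_forall_le_inner_sub [CompleteSpace F] {L : Set F} (hLc : IsClosed L)
    (hLconv : Convex ℝ L) (hLne : L.Nonempty) {x : F} (hx : x ∉ L) :
    ∃ v : F, ‖v‖ = 1 ∧ ∃ d > 0, ∀ q ∈ L, d ≤ ⟪v, x - q⟫_ℝ := by
  obtain ⟨f, s, hfL, hsx⟩ := geometric_hahn_banach_closed_point hLconv hLc hx
  set v₀ := (InnerProductSpace.toDual ℝ F).symm f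
  have hv₀ : ∀ y, ⟪v₀, y⟫_ℝ = f y := fun y => InnerProductSpace.toDual_symm_apply
  have hv₀0 : v₀ ≠ 0 := by
    obtain ⟨q, hq⟩ := hLne
    intro h
    have := (hfL q hq).trans hsx
    simp [← hv₀, h] at this
  have hnorm : 0 < ‖v₀‖ := norm_pos_iff.2 hv₀0
  refine ⟨‖v₀‖⁻¹ • v₀, norm_smul_inv_norm hv₀0, (f x - s) / ‖v₀‖,
    div_pos (sub_pos.2 hsx) hnorm, fun q hq => ?_⟩
  rw [real_inner_smul_left, inner_sub_right, hv₀, hv₀, div_eq_inv_mul]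
  gcongr
  exact (hfL q hq).le

end Hyperplane

section FiniteDimensional

variable {F : Type*} [NormedAddCommGroup F] [InnerProductSpace ℝ F] [FiniteDimensional ℝ F]

theorem exists_norm_eq_one_abs_inner_lt_inner_ne_zero (hF : 2 ≤ finrank ℝ F) {v w : F}
    (hv : ‖v‖ = 1) (hw : ‖w‖ = 1) {η : ℝ} (hη : 0 < η) :
    ∃ u : F, ‖u‖ = 1 ∧ |⟪v, u⟫_ℝ| < η ∧ ⟪w, u⟫_ℝ ≠ 0 := by
  have hfin : 0 < finrank ℝ (ℝ ∙ v)ᗮ := by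
    have := (ℝ ∙ v).finrank_add_finrank_orthogonal
    have := finrank_span_le_card (R := ℝ) ({v} : Set F)
    simp only [Set.toFinset_singleton, Finset.card_singleton] at this
    omega
  have : Nontrivial (ℝ ∙ v)ᗮ := Module.nontrivial_of_finrank_pos hfin
  obtain ⟨⟨e, hev⟩, he⟩ := exists_norm_eq (ℝ ∙ v)ᗮ zero_le_one
  rw [Submodule.coe_norm] at he
  rw [Submodule.mem_orthogonal_singleton_iff_inner_right] at hev
  by_cases hwe : ⟪w, e⟫_ℝ = 0
  · -- tilt `e` slightly towards `w`
    set s := min 1 (η / 2)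
    have hs₀ : 0 < s := lt_min one_pos (half_pos hη)
    have hs₁ : s ≤ 1 := min_le_left _ _
    have hcs : √(1 - s ^ 2) ^ 2 = 1 - s ^ 2 := Real.sq_sqrt (by nlinarith)
    refine ⟨√(1 - s ^ 2) • e + s • w, ?_, ?_, ?_⟩
    · have hew : ⟪√(1 - s ^ 2) • e, s • w⟫_ℝ = 0 := by
        rw [real_inner_smul_left, real_inner_smul_right, real_inner_comm, hwe]; ring
      have h := norm_add_sq_eq_norm_sq_add_norm_sq_real hew
      rw [norm_smul, norm_smul, he, hw, Real.norm_eq_abs, Real.norm_eq_abs, abs_of_pos hs₀,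
        abs_of_nonneg (Real.sqrt_nonneg _)] at h
      rw [← pow_eq_one_iff_of_nonneg (norm_nonneg _) two_ne_zero]
      nlinarith
    · rw [inner_add_right, real_inner_smul_right, real_inner_smul_right, hev, mul_zero, zero_add,
        abs_mul, abs_of_pos hs₀]
      have : |⟪v, w⟫_ℝ| ≤ 1 := by simpa [hv, hw] using abs_real_inner_le_norm v w
      have : s ≤ η / 2 := min_le_right _ _
      nlinarith [abs_nonneg ⟪v, w⟫_ℝ]
    · rw [inner_add_right, real_inner_smul_right, real_inner_smul_right, hwe,
        real_inner_self_eq_norm_sq, hw]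
      simp [hs₀.ne']
  · exact ⟨e, he, by simpa [hev] using hη, hwe⟩

theorem exists_ball_abs_inner_le_and_le_abs_inner (hF : 2 ≤ finrank ℝ F) {v w : F}
    (hv : ‖v‖ = 1) (hw : ‖w‖ = 1) {η : ℝ} (hη : 0 < η) :
    ∃ u₀ : F, ‖u₀‖ = 1 ∧ ∃ r > 0, ∃ α > 0,
      ∀ u ∈ ball u₀ r, |⟪v, u⟫_ℝ| ≤ η ∧ α ≤ |⟪w, u⟫_ℝ| := by
  obtain ⟨u₀, hu₀, hvu₀, hwu₀⟩ := exists_norm_eq_one_abs_inner_lt_inner_ne_zero hF hv hw hη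
  set r := min (η - |⟪v, u₀⟫_ℝ|) (|⟪w, u₀⟫_ℝ| / 2)
  refine ⟨u₀, hu₀, r, lt_min (by linarith) (by positivity), |⟪w, u₀⟫_ℝ| / 2, by positivity,
    fun u hu => ?_⟩
  have hclose : ∀ a : F, ‖a‖ = 1 → |⟪a, u⟫_ℝ - ⟪a, u₀⟫_ℝ| < r := fun a ha => by
    rw [← inner_sub_right]
    refine (abs_real_inner_le_norm a _).trans_lt ?_
    rwa [ha, one_mul, ← dist_eq_norm]
  have h₁ := (abs_sub_abs_le_abs_sub ⟪v, u⟫_ℝ ⟪v, u₀⟫_ℝ).trans (hclose v hv).le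
  have h₂ := ((abs_sub_abs_le_abs_sub ⟪w, u₀⟫_ℝ ⟪w, u⟫_ℝ).trans_eq (abs_sub_comm _ _)).trans
    (hclose w hw).le
  have : r ≤ η - |⟪v, u₀⟫_ℝ| := min_le_left _ _
  have : r ≤ |⟪w, u₀⟫_ℝ| / 2 := min_le_right _ _
  constructor <;> linarith

theorem exists_norm_eq_one_orthogonal_span_singleton_le [Nontrivial F] {D : Submodule ℝ F}
    (hD : finrank ℝ F ≤ finrank ℝ D + 1) : ∃ w : F, ‖w‖ = 1 ∧ (ℝ ∙ w)ᗮ ≤ D := by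
  rcases eq_or_ne Dᗮ ⊥ with h | h
  · obtain ⟨w, hw⟩ := exists_norm_eq F zero_le_one
    exact ⟨w, hw, by simp [Submodule.orthogonal_eq_bot_iff.1 h]⟩
  obtain ⟨w₀, hw₀D, hw₀⟩ := Submodule.exists_mem_ne_zero_of_ne_bot h
  set w := (‖w₀‖⁻¹ : ℝ) • w₀
  have hwD : ℝ ∙ w = Dᗮ := by
    refine Submodule.eq_of_le_of_finrank_le
      ((Submodule.span_singleton_le_iff_mem _ _).2 (Dᗮ.smul_mem _ hw₀D)) ?_
    have := D.finrank_add_finrank_orthogonal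
    rw [finrank_span_singleton (by simpa [w] using hw₀)]
    omega
  exact ⟨w, norm_smul_inv_norm hw₀, by rw [hwD, Submodule.orthogonal_orthogonal]⟩

theorem Convex.exists_affineSpan_inter_ball_subset {K : Set F} (hK : Convex ℝ K)
    (hKne : K.Nonempty) : ∃ z ∈ K, ∃ ρ > 0, ↑(affineSpan ℝ K) ∩ ball z ρ ⊆ K := by
  obtain ⟨_, hz'⟩ := hKne.intrinsicInterior hK
  obtain ⟨z, hz, rfl⟩ := mem_intrinsicInterior.1 hz'
  obtain ⟨ρ, hρ, hball⟩ := Metric.mem_nhds_iff.1 (mem_interior_iff_mem_nhds.1 hz)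
  exact ⟨z, hball (mem_ball_self hρ), ρ, hρ, fun y ⟨hy, hyz⟩ => hball (a := ⟨y, hy⟩) hyz⟩

theorem Convex.exists_hyperplane_inter_ball_subset [Nontrivial F] {K : Set F} (hK : Convex ℝ K)
    (hKne : K.Nonempty) (hdim : finrank ℝ F ≤ finrank ℝ (affineSpan ℝ K).direction + 1) :
    ∃ w z : F, ∃ ρ > 0, ‖w‖ = 1 ∧ ↑(AffineSubspace.mk' z (ℝ ∙ w)ᗮ) ∩ ball z ρ ⊆ K := by
  obtain ⟨z, hzK, ρ, hρ, hball⟩ := hK.exists_affineSpan_inter_ball_subset hKne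
  obtain ⟨w, hw, hwD⟩ := exists_norm_eq_one_orthogonal_span_singleton_le hdim
  refine ⟨w, z, ρ, hρ, hw, (inter_subset_inter_left _ fun p hp => ?_).trans hball⟩
  rw [SetLike.mem_coe, AffineSubspace.mem_mk'] at hp
  simpa using AffineSubspace.vadd_mem_of_mem_direction (hwD hp) (subset_affineSpan ℝ K hzK)

end FiniteDimensional

section Sphere

variable {F : Type*} [NormedAddCommGroup F] [InnerProductSpace ℝ F]

theorem sphere_inter_inner_nonpos_subset_stereoInvFunAux_image {v : F} (hv : ‖v‖ = 1) :
    sphere (0 : F) 1 ∩ {x | ⟪v, x⟫_ℝ ≤ 0} ⊆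
      stereoInvFunAux v '' (↑(ℝ ∙ v)ᗮ ∩ closedBall 0 2) := by
  rintro x ⟨hx, hvx⟩
  have hxv : x ≠ v := by
    rintro rfl
    norm_num [real_inner_self_eq_norm_sq, hv] at hvx
  set w := stereoToFun v x
  have hwx : stereoInvFunAux v w = x :=
    congrArg Subtype.val (stereo_left_inv hv (x := ⟨x, hx⟩) hxv)
  refine ⟨w, ⟨w.2, ?_⟩, hwx⟩
  have hvw : ⟪v, (w : F)⟫_ℝ = 0 := Submodule.mem_orthogonal_singleton_iff_inner_right.1 w.2
  have hpos : 0 < ‖(w : F)‖ ^ 2 + 4 := by positivity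
  rw [← hwx, stereoInvFunAux_apply, mem_ofPred_eq, real_inner_smul_right, inner_add_right,
    real_inner_smul_right, real_inner_smul_right, hvw, real_inner_self_eq_norm_sq, hv,
    inv_mul_le_iff₀ hpos] at hvx
  have : ‖(w : F)‖ ^ 2 ≤ 2 ^ 2 := by nlinarith
  rw [mem_closedBall_zero_iff]
  exact (pow_le_pow_iff_left₀ (norm_nonneg _) zero_le_two two_ne_zero).1 this

variable [FiniteDimensional ℝ F] [MeasurableSpace F] [BorelSpace F]

theorem hausdorffMeasure_submodule_inter_ball {P : Submodule ℝ F} {k : ℕ} (hk : finrank ℝ P = k)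
    {c : F} (hc : c ∈ P) (ε : ℝ) :
    μH[k] (↑P ∩ ball c ε) = μH[k] (ball (0 : EuclideanSpace ℝ (Fin k)) ε) := by
  subst hk
  set e := (stdOrthonormalBasis ℝ P).repr
  set ψ : EuclideanSpace ℝ (Fin (finrank ℝ P)) → F := fun y => c + (e.symm y : F)
  have hψ : Isometry ψ :=
    (IsometryEquiv.addLeft c).isometry.comp (isometry_subtype_coe.comp e.symm.isometry)
  have himage : ψ '' ball 0 ε = ↑P ∩ ball c ε := by
    ext p
    constructor
    · rintro ⟨y, hy, rfl⟩
      have hnorm : ‖(e.symm y : F)‖ = ‖y‖ := e.symm.norm_map y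
      exact ⟨P.add_mem hc (e.symm y).2, by simpa [ψ, dist_eq_norm, hnorm] using hy⟩
    · rintro ⟨hp, hpc⟩
      exact ⟨e ⟨p - c, P.sub_mem hp hc⟩, by simpa [dist_eq_norm] using hpc, by simp [ψ]⟩
  rw [← himage, hψ.hausdorffMeasure_image (Or.inl (Nat.cast_nonneg _))]

variable {d : ℕ} [Fact (finrank ℝ F = d + 1)]

theorem hausdorffMeasure_sphere_lt_top : μH[d] (sphere (0 : F) 1) < ⊤ := by
  have : Nontrivial F :=
    Module.nontrivial_of_finrank_eq_succ (R := ℝ) (Fact.out : finrank ℝ F = d + 1)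
  have hemisphere (v : F) (hv : ‖v‖ = 1) : μH[d] (sphere (0 : F) 1 ∩ {x | ⟪v, x⟫_ℝ ≤ 0}) < ⊤ := by
    set s := ↑(ℝ ∙ v)ᗮ ∩ closedBall (0 : F) 2
    have hs : IsCompact s :=
      (isCompact_closedBall _ _).inter_left (Submodule.closed_of_finiteDimensional _)
    obtain ⟨C, hC⟩ := (contDiff_stereoInvFunAux (v := v)).locallyLipschitz.locallyLipschitzOn
      |>.exists_lipschitzOnWith_of_compact hs
    have hs_fin : μH[d] s < ⊤ := by
      calc μH[d] s ≤ μH[d] (↑(ℝ ∙ v)ᗮ ∩ ball (0 : F) 3) :=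
            measure_mono (inter_subset_inter_right _ (closedBall_subset_ball (by norm_num)))
        _ = μH[d] (ball (0 : EuclideanSpace ℝ (Fin d)) 3) :=
            hausdorffMeasure_submodule_inter_ball
              (Submodule.finrank_orthogonal_span_singleton (by simp [← norm_ne_zero_iff, hv]))
              (zero_mem _) 3
        _ < ⊤ := measure_ball_lt_top
    calc _ ≤ μH[d] (stereoInvFunAux v '' s) :=
          measure_mono (sphere_inter_inner_nonpos_subset_stereoInvFunAux_image hv)
      _ ≤ C ^ (d : ℝ) * μH[d] s := hC.hausdorffMeasure_image_le (Nat.cast_nonneg _)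
      _ < ⊤ := ENNReal.mul_lt_top (by simp) hs_fin
  obtain ⟨v, hv⟩ := exists_norm_eq F zero_le_one
  have hcover : sphere (0 : F) 1 ⊆
      (sphere 0 1 ∩ {x | ⟪v, x⟫_ℝ ≤ 0}) ∪ (sphere 0 1 ∩ {x | ⟪-v, x⟫_ℝ ≤ 0}) := fun x hx => by
    rcases le_total ⟪v, x⟫_ℝ 0 with h | h
    · exact Or.inl ⟨hx, h⟩
    · exact Or.inr ⟨hx, by simpa [inner_neg_left] using h⟩
  calc _ ≤ _ := measure_mono hcover
    _ ≤ _ := measure_union_le _ _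
    _ < ⊤ := ENNReal.add_lt_top.2 ⟨hemisphere v hv, hemisphere (-v) (by rwa [norm_neg])⟩

theorem hausdorffMeasure_sphere_inter_ball_pos {u : F} (hu : ‖u‖ = 1) {r : ℝ} (hr : 0 < r) :
    0 < μH[d] (sphere (0 : F) 1 ∩ ball u r) := by
  set P := (ℝ ∙ u)ᗮ
  set g : F → F := fun y => y + √(1 - ‖y‖ ^ 2) • u
  have hg : ContinuousAt g 0 := by fun_prop
  obtain ⟨δ, hδ, hgδ⟩ := Metric.continuousAt_iff.1 hg r hr
  have hg0 : g 0 = u := by simp [g]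
  have hsub : ↑P ∩ ball 0 (min δ 1) ⊆ P.starProjection '' (sphere 0 1 ∩ ball u r) := by
    rintro y ⟨hyP, hy⟩
    rw [mem_ball_zero_iff, lt_min_iff] at hy
    have huy : ⟪u, y⟫_ℝ = 0 := Submodule.mem_orthogonal_singleton_iff_inner_right.1 hyP
    refine ⟨g y, ⟨?_, ?_⟩, ?_⟩
    · have h := norm_add_sq_eq_norm_sq_add_norm_sq_real
        (x := y) (y := √(1 - ‖y‖ ^ 2) • u) (by rw [real_inner_smul_right, real_inner_comm, huy,
          mul_zero])
      rw [norm_smul, hu, mul_one, Real.norm_eq_abs, abs_of_nonneg (Real.sqrt_nonneg _),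
        Real.mul_self_sqrt (by nlinarith [norm_nonneg y])] at h
      rw [mem_sphere_zero_iff_norm, ← pow_eq_one_iff_of_nonneg (norm_nonneg _) two_ne_zero]
      nlinarith
    · rw [← hg0]
      exact hgδ (by simpa using hy.1)
    · have hPu : P.starProjection u = 0 :=
        Submodule.starProjection_orthogonalComplement_singleton_eq_zero u
      simp [g, Submodule.starProjection_eq_self_iff.2 hyP, hPu]
  have hu0 : u ≠ 0 := by simp [← norm_ne_zero_iff, hu]
  calc 0 < μH[d] (↑P ∩ ball 0 (min δ 1)) := by
        rw [hausdorffMeasure_submodule_inter_ball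
          (Submodule.finrank_orthogonal_span_singleton hu0) P.zero_mem]
        exact measure_ball_pos _ _ (lt_min hδ one_pos)
    _ ≤ μH[d] (P.starProjection '' (sphere 0 1 ∩ ball u r)) := measure_mono hsub
    _ ≤ 1 ^ (d : ℝ) * μH[d] (sphere 0 1 ∩ ball u r) :=
        (P.starProjection.lipschitzWith_of_opNorm_le (by simpa using P.starProjection_norm_le)
          |>.hausdorffMeasure_image_le (Nat.cast_nonneg _) _)
    _ = _ := by simp

end Sphere

section Euclidean

variable {n : ℕ}

theorem projHyperplane_eq_starProjection (u : EuclideanSpace ℝ (Fin n)) :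
    projHyperplane u = (ℝ ∙ u)ᗮ.starProjection :=
  rfl

theorem lintegral_sphereMeasure_pos (hn : 1 ≤ n) {f : EuclideanSpace ℝ (Fin n) → ℝ≥0∞}
    {u₀ : EuclideanSpace ℝ (Fin n)} (hu₀ : ‖u₀‖ = 1) {r : ℝ} (hr : 0 < r) {κ : ℝ≥0∞}
    (hκ : 0 < κ) (hf : ∀ u ∈ sphere 0 1 ∩ ball u₀ r, κ ≤ f u) :
    0 < ∫⁻ u, f u ∂sphereMeasure n := by
  have : Fact (finrank ℝ (EuclideanSpace ℝ (Fin n)) = (n - 1) + 1) :=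
    ⟨by rw [finrank_euclideanSpace_fin]; omega⟩
  have hS : MeasurableSet (sphere (0 : EuclideanSpace ℝ (Fin n)) 1 ∩ ball u₀ r) :=
    isClosed_sphere.measurableSet.inter measurableSet_ball
  rw [sphereMeasure, lintegral_smul_measure, ← Nat.cast_pred hn]
  refine ENNReal.mul_pos (ENNReal.inv_ne_zero.2 hausdorffMeasure_sphere_lt_top.ne) (ne_of_gt ?_)
  calc 0 < κ * μH[(n - 1 : ℕ)] (sphere 0 1 ∩ ball u₀ r) :=
        ENNReal.mul_pos hκ.ne' (hausdorffMeasure_sphere_inter_ball_pos hu₀ hr).ne'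
    _ = ∫⁻ _ in sphere 0 1 ∩ ball u₀ r, κ ∂μH[(n - 1 : ℕ)] := by rw [setLIntegral_const]
    _ ≤ ∫⁻ u in sphere 0 1 ∩ ball u₀ r, f u ∂μH[(n - 1 : ℕ)] := setLIntegral_mono' hS hf
    _ ≤ ∫⁻ u in sphere 0 1, f u ∂μH[(n - 1 : ℕ)] := lintegral_mono_set inter_subset_left

theorem lintegral_hausdorffMeasure_projHyperplane_image_diff_pos (hn : 2 ≤ n)
    {K L : Set (EuclideanSpace ℝ (Fin n))} (hK : Convex ℝ K) {w z : EuclideanSpace ℝ (Fin n)}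
    {ρ : ℝ} (hρ : 0 < ρ) (hw : ‖w‖ = 1) (hslab : ↑(AffineSubspace.mk' z (ℝ ∙ w)ᗮ) ∩ ball z ρ ⊆ K)
    (hLc : IsCompact L) (hLconv : Convex ℝ L) (hLne : L.Nonempty) {x : EuclideanSpace ℝ (Fin n)}
    (hxK : x ∈ K) (hxL : x ∉ L) :
    0 < ∫⁻ u, μH[(n : ℝ) - 1] (projHyperplane u '' K \ projHyperplane u '' L) ∂sphereMeasure n := by
  have : Fact (finrank ℝ (EuclideanSpace ℝ (Fin n)) = (n - 1) + 1) :=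
    ⟨by rw [finrank_euclideanSpace_fin]; omega⟩
  obtain ⟨v, hv, d, hd, hsep⟩ :=
    exists_norm_eq_one_forall_le_inner_sub hLc.isClosed hLconv hLne hxL
  obtain ⟨R, hR, hxR⟩ :=
    (hLc.image (continuous_sub_left x)).isBounded.exists_pos_norm_le
  obtain ⟨u₀, hu₀, r, hr, α, hα, hcap⟩ := exists_ball_abs_inner_le_and_le_abs_inner
    (by rw [finrank_euclideanSpace_fin]; omega) hv hw (div_pos hd (mul_pos two_pos hR))
  set s := ρ / (1 + α⁻¹)
  -- `t` is small enough that the disk produced below stays within `d / 2` of the image of `x`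
  set t := d / (2 * (‖z - x‖ + s) + d)
  have hs : 0 < s := by positivity
  have hden : 0 < 2 * (‖z - x‖ + s) + d := by positivity
  have ht₀ : 0 < t := div_pos hd hden
  have ht₁ : t ≤ 1 := (div_le_one hden).2 (by linarith [norm_nonneg (z - x)])
  have htd : t * (‖z - x‖ + s) < d / 2 := by
    rw [div_mul_eq_mul_div, div_lt_div_iff₀ hden two_pos]
    nlinarith [norm_nonneg (z - x)]
  rw [← Nat.cast_pred (by omega : 0 < n)]
  -- the measure of a disk in `u^⊥` does not depend on `u`, so this bound is uniform on the cap
  refine lintegral_sphereMeasure_pos (by omega) hu₀ hr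
    (κ := μH[(n - 1 : ℕ)] (ball (0 : EuclideanSpace ℝ (Fin (n - 1))) (t * s)))
    (measure_ball_pos _ _ (by positivity)) ?_
  rintro u ⟨hu, hu₀r⟩
  rw [mem_sphere_zero_iff_norm] at hu
  obtain ⟨hvu, hwu⟩ := hcap u hu₀r
  have hfar : ∀ q ∈ L, d / 2 ≤ ‖(ℝ ∙ u)ᗮ.starProjection (x - q)‖ := fun q hq => by
    have h₁ := inner_sub_mul_abs_inner_le_norm_starProjection hu hv (x - q)
    have h₂ : ‖x - q‖ * |⟪v, u⟫_ℝ| ≤ R * (d / (2 * R)) :=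
      mul_le_mul (hxR _ ⟨q, hq, rfl⟩) hvu (abs_nonneg _) hR.le
    have h₃ : R * (d / (2 * R)) = d / 2 := by field_simp
    linarith [hsep q hq]
  have hu0 : u ≠ 0 := by simp [← norm_ne_zero_iff, hu]
  rw [projHyperplane_eq_starProjection]
  calc _ = μH[(n - 1 : ℕ)] (↑(ℝ ∙ u)ᗮ ∩ ball ((ℝ ∙ u)ᗮ.starProjection (x + t • (z - x))) (t * s)) :=
        (hausdorffMeasure_submodule_inter_ball (Submodule.finrank_orthogonal_span_singleton hu0)
          (Submodule.starProjection_apply_mem _ _) _).symm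
    _ ≤ _ := measure_mono
        (inter_ball_subset_starProjection_image_diff hK hu hw hα hwu hslab hxK hfar ht₀ ht₁ htd)

end Euclidean

/-- Positive definiteness of the intrinsic volume metric `δ_{n−1}`:
if `K`, `L` are compact convex sets of dimension at least `n−1` in `ℝⁿ` and
`∫_{S^{n−1}} vol_{n−1}((K|u^⊥) △ (L|u^⊥)) dσ(u) = 0`, then `K = L`. -/
theorem intrinsic_metric_codim_one_positive_definite
    (n : ℕ) (hn : 2 ≤ n) (K L : Set (EuclideanSpace ℝ (Fin n)))
    (hKc : IsCompact K) (hKconv : Convex ℝ K)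
    (hLc : IsCompact L) (hLconv : Convex ℝ L)
    (hKdim : n - 1 ≤ Module.finrank ℝ (affineSpan ℝ K).direction)
    (hLdim : n - 1 ≤ Module.finrank ℝ (affineSpan ℝ L).direction)
    (h : (∫⁻ u, μH[(n : ℝ) - 1]
        (symmDiff (projHyperplane u '' K) (projHyperplane u '' L)) ∂(sphereMeasure n)) = 0) :
    K = L := by
  have : Nontrivial (EuclideanSpace ℝ (Fin n)) :=
    Module.nontrivial_of_finrank_pos (R := ℝ) (by rw [finrank_euclideanSpace_fin]; omega)
  have hslab (M : Set (EuclideanSpace ℝ (Fin n))) (hM : Convex ℝ M)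
      (hdim : n - 1 ≤ finrank ℝ (affineSpan ℝ M).direction) :
      ∃ w z, ∃ ρ > 0, ‖w‖ = 1 ∧ ↑(AffineSubspace.mk' z (ℝ ∙ w)ᗮ) ∩ ball z ρ ⊆ M := by
    rcases M.eq_empty_or_nonempty with rfl | hne
    · rw [AffineSubspace.span_empty, AffineSubspace.direction_bot, finrank_bot] at hdim
      omega
    · exact hM.exists_hyperplane_inter_ball_subset hne (by rw [finrank_euclideanSpace_fin]; omega)
  obtain ⟨wK, zK, ρK, hρK, hwK, hK⟩ := hslab K hKconv hKdim
  obtain ⟨wL, zL, ρL, hρL, hwL, hL⟩ := hslab L hLconv hLdim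
  have hzK : zK ∈ K := hK ⟨AffineSubspace.self_mem_mk' _ _, mem_ball_self hρK⟩
  have hzL : zL ∈ L := hL ⟨AffineSubspace.self_mem_mk' _ _, mem_ball_self hρL⟩
  refine Subset.antisymm (fun x hxK => ?_) (fun x hxL => ?_) <;> by_contra hx
  · exact (lintegral_hausdorffMeasure_projHyperplane_image_diff_pos hn hKconv hρK hwK hK hLc
      hLconv ⟨zL, hzL⟩ hxK hx).not_ge
      ((lintegral_mono fun _ => measure_mono le_sup_left).trans h.le)
  · exact (lintegral_hausdorffMeasure_projHyperplane_image_diff_pos hn hLconv hρL hwL hL hKc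
      hKconv ⟨zK, hzK⟩ hxL hx).not_ge
      ((lintegral_mono fun _ => measure_mono le_sup_right).trans h.le)
end

section
/- Let K and L be nonempty compact convex subsets of ℝⁿ with K ∩ L ≠ ∅, and let u ∈ S^{n−1}. Then 𝓗¹((K|ℓ_u) △ (L|ℓ_u)) = |h_K(u) − h_L(u)| + |h_K(−u) − h_L(−u)|, where ℓ_u = span{u} and K|ℓ_u, L|ℓ_u are the orthogonal projections of K and L onto the line ℓ_u. -/
open MeasureTheory Metric

/-- Orthogonal projection of `x` onto the line `ℓ_u = span{u}`, viewed in the ambient space. -/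
noncomputable def projLine {n : ℕ} (u x : EuclideanSpace ℝ (Fin n)) :
    EuclideanSpace ℝ (Fin n) :=
  (Submodule.orthogonalProjectionOnto (ℝ ∙ u) x : EuclideanSpace ℝ (Fin n))

/-- The support function `h_K(u) = sup_{x ∈ K} ⟨x, u⟩` of a set `K ⊆ ℝⁿ`. -/
noncomputable def suppFn {n : ℕ} (K : Set (EuclideanSpace ℝ (Fin n)))
    (u : EuclideanSpace ℝ (Fin n)) : ℝ :=
  sSup ((fun x => (inner ℝ x u : ℝ)) '' K)

/-!
The projection onto `ℓ_u` factors as `x ↦ ⟪x, u⟫` followed by the isometric embedding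
`t ↦ t • u` of `ℝ`, so `𝓗¹` of the symmetric difference is the Lebesgue measure of the symmetric
difference of the images of `K` and `L` under `⟪·, u⟫`. These images are the intervals
`[-h_K(-u), h_K(u)]` and `[-h_L(-u), h_L(u)]`, which overlap because `K ∩ L ≠ ∅`; for overlapping intervals `[a, b]`,
`[c, d]` the symmetric difference has length `|a - c| + |b - d|`.
-/

open Set
open scoped Pointwise RealInnerProductSpace symmDiff

lemma image_inner_eq_Icc {E : Type*} [NormedAddCommGroup E] [InnerProductSpace ℝ E] {K : Set E}
    (hKc : IsCompact K) (hKconv : Convex ℝ K) (hKne : K.Nonempty) (u : E) :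
    (fun x => ⟪x, u⟫) '' K =
      Icc (sInf ((fun x => ⟪x, u⟫) '' K)) (sSup ((fun x => ⟪x, u⟫) '' K)) :=
  have hcont : Continuous fun x : E => ⟪x, u⟫ := by fun_prop
  eq_Icc_of_connected_compact
    ⟨hKne.image _, hKconv.isPreconnected.image _ hcont.continuousOn⟩ (hKc.image hcont)

lemma volume_Icc_diff_Icc {a b c d : ℝ} (h : max a c ≤ min b d) :
    volume (Icc a b \ Icc c d) = ENNReal.ofReal (b - a - (min b d - max a c)) := by
  rw [← sdiff_self_inter, measure_sdiff inter_subset_left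
      (measurableSet_Icc.inter measurableSet_Icc).nullMeasurableSet
      (measure_ne_top_of_subset inter_subset_left measure_Icc_lt_top.ne),
    Icc_inter_Icc, Real.volume_Icc, Real.volume_Icc, ← ENNReal.ofReal_sub _ (by linarith)]

lemma volume_symmDiff_Icc {a b c d : ℝ} (h : (Icc a b ∩ Icc c d).Nonempty) :
    volume (Icc a b ∆ Icc c d) = ENNReal.ofReal (|a - c| + |b - d|) := by
  rw [Icc_inter_Icc, nonempty_Icc] at h
  rw [measure_symmDiff_eq measurableSet_Icc.nullMeasurableSet measurableSet_Icc.nullMeasurableSet,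
    volume_Icc_diff_Icc h, volume_Icc_diff_Icc (by rwa [max_comm, min_comm]),
    ← ENNReal.ofReal_add (by grind) (by grind)]
  congr 1
  grind

section EuclideanSpace

variable {n : ℕ}

lemma suppFn_neg (K : Set (EuclideanSpace ℝ (Fin n))) (u : EuclideanSpace ℝ (Fin n)) :
    suppFn K (-u) = -sInf ((fun x => ⟪x, u⟫) '' K) := by
  rw [suppFn, ← Real.sSup_neg, ← image_neg_eq_neg, image_image]
  simp only [inner_neg_right]

lemma image_inner_eq_Icc_suppFn {K : Set (EuclideanSpace ℝ (Fin n))}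
    (hKc : IsCompact K) (hKconv : Convex ℝ K) (hKne : K.Nonempty) (u : EuclideanSpace ℝ (Fin n)) :
    (fun x => ⟪x, u⟫) '' K = Icc (-suppFn K (-u)) (suppFn K u) := by
  rw [suppFn_neg, neg_neg, suppFn]
  exact image_inner_eq_Icc hKc hKconv hKne u

lemma projLine_eq_inner_smul {u : EuclideanSpace ℝ (Fin n)} (hu : ‖u‖ = 1)
    (x : EuclideanSpace ℝ (Fin n)) : projLine u x = ⟪x, u⟫ • u := by
  rw [projLine, ← Submodule.starProjection_apply, Submodule.starProjection_unit_singleton ℝ hu,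
    real_inner_comm]

lemma image_projLine {u : EuclideanSpace ℝ (Fin n)} (hu : ‖u‖ = 1)
    (K : Set (EuclideanSpace ℝ (Fin n))) :
    projLine u '' K = (fun t : ℝ => t • u) '' ((fun x => ⟪x, u⟫) '' K) := by
  rw [image_image]
  exact image_congr fun x _ => projLine_eq_inner_smul hu x

end EuclideanSpace

theorem hausdorff_symmDiff_line_projection_eq_support_diff_general
    (n : ℕ) (K L : Set (EuclideanSpace ℝ (Fin n)))
    (hKc : IsCompact K) (hKconv : Convex ℝ K)
    (hLc : IsCompact L) (hLconv : Convex ℝ L)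
    (hKL : (K ∩ L).Nonempty)
    (u : EuclideanSpace ℝ (Fin n)) (hu : u ∈ sphere (0 : EuclideanSpace ℝ (Fin n)) 1) :
    μH[1] (symmDiff (projLine u '' K) (projLine u '' L)) =
      ENNReal.ofReal (|suppFn K u - suppFn L u| + |suppFn K (-u) - suppFn L (-u)|) := by
  have hu1 : ‖u‖ = 1 := by simpa using hu
  obtain ⟨z, hzK, hzL⟩ := hKL
  have hK := image_inner_eq_Icc_suppFn hKc hKconv ⟨z, hzK⟩ u
  have hL := image_inner_eq_Icc_suppFn hLc hLconv ⟨z, hzL⟩ u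
  have hoverlap :
      (Icc (-suppFn K (-u)) (suppFn K u) ∩ Icc (-suppFn L (-u)) (suppFn L u)).Nonempty :=
    ⟨⟪z, u⟫, hK ▸ mem_image_of_mem _ hzK, hL ▸ mem_image_of_mem _ hzL⟩
  have hinj : Function.Injective fun t : ℝ => t • u :=
    smul_left_injective ℝ (by simp [← norm_ne_zero_iff, hu1])
  rw [image_projLine hu1, image_projLine hu1, ← image_symmDiff hinj,
    hausdorffMeasure_smul_right_image, hausdorffMeasure_real, hK, hL, volume_symmDiff_Icc hoverlap,
    show ‖u‖₊ = 1 from NNReal.eq hu1, one_smul, neg_sub_neg, abs_sub_comm (suppFn L (-u)),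
    add_comm]

/-- If `K, L ⊂ ℝⁿ` are nonempty compact convex sets with `K ∩ L ≠ ∅` and
`u ∈ S^{n−1}`, then `𝓗¹((K|ℓ_u) △ (L|ℓ_u)) = |h_K(u) − h_L(u)| + |h_K(−u) − h_L(−u)|`. -/
theorem hausdorff_symmDiff_line_projection_eq_support_diff
    (n : ℕ) (K L : Set (EuclideanSpace ℝ (Fin n)))
    (hKc : IsCompact K) (hKconv : Convex ℝ K) (hKne : K.Nonempty)
    (hLc : IsCompact L) (hLconv : Convex ℝ L) (hLne : L.Nonempty)
    (hKL : (K ∩ L).Nonempty)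
    (u : EuclideanSpace ℝ (Fin n)) (hu : u ∈ sphere (0 : EuclideanSpace ℝ (Fin n)) 1) :
    μH[1] (symmDiff (projLine u '' K) (projLine u '' L)) =
      ENNReal.ofReal (|suppFn K u - suppFn L u| + |suppFn K (-u) - suppFn L (-u)|) :=
  hausdorff_symmDiff_line_projection_eq_support_diff_general n K L hKc hKconv hLc hLconv hKL u hu
end
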